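/- Let d ≥ 1, let 0 < p ≤ 1, and let ρ_m = p|ψ_d⟩⟨ψ_d| + ((1-p)/d)·I_d with |ψ_d⟩ = (1/√d)·Σ_{i=1}^d |i⟩, and let b_ii denote the diagonal entries of √ρ_m. Then the upper bound of Theorem 2 is tight for ρ_m: 1 - Σ_{i=1}^d b_ii² = C_g(ρ_m) = 1 - [√(1-p) + (1/d)·(√(1-p+dp) - √(1-p))]². -/

import Mathlib

open scoped ComplexOrder

open Matrix Classical in
/-- The positive semidefinite square root of a matrix (junk value `0` if not PSD). -/
noncomputable def msqrt {d : ℕ} (A : Matrix (Fin d) (Fin d) ℂ) : Matrix (Fin d) (Fin d) ℂ :=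
  if h : A.PosSemidef then
    h.1.eigenvectorUnitary.1 * diagonal ((↑) ∘ (√·) ∘ h.1.eigenvalues) *
      (star h.1.eigenvectorUnitary : Matrix (Fin d) (Fin d) ℂ)
  else 0

/-- A density matrix: positive semidefinite with trace 1. -/
def IsDensity {d : ℕ} (ρ : Matrix (Fin d) (Fin d) ℂ) : Prop :=
  ρ.PosSemidef ∧ ρ.trace = 1

/-- An incoherent state: a diagonal density matrix. -/
def IsIncoherent {d : ℕ} (σ : Matrix (Fin d) (Fin d) ℂ) : Prop :=
  IsDensity σ ∧ σ.IsDiag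

/-- The fidelity `F(ρ,σ) = (Tr √(√σ ρ √σ))²`. -/
noncomputable def fid {d : ℕ} (ρ σ : Matrix (Fin d) (Fin d) ℂ) : ℝ :=
  ((msqrt (msqrt σ * ρ * msqrt σ)).trace.re) ^ 2

/-- The geometric measure of coherence `C_g(ρ) = 1 - sup {F(ρ,σ) : σ incoherent}`. -/
noncomputable def Cg {d : ℕ} (ρ : Matrix (Fin d) (Fin d) ℂ) : ℝ :=
  1 - sSup {x : ℝ | ∃ σ : Matrix (Fin d) (Fin d) ℂ, IsIncoherent σ ∧ x = fid ρ σ}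

/-- The projector `|ψ_d⟩⟨ψ_d|` onto the maximally coherent state, with all entries `1/d`. -/
noncomputable def psiProj (d : ℕ) : Matrix (Fin d) (Fin d) ℂ :=
  Matrix.of fun _ _ => (1 / d : ℂ)

/-- The maximally coherent mixed state `ρ_m = p |ψ_d⟩⟨ψ_d| + ((1-p)/d) I_d`. -/
noncomputable def rhoM (d : ℕ) (p : ℝ) : Matrix (Fin d) (Fin d) ℂ :=
  (p : ℂ) • psiProj d + (((1 - p) / d : ℝ) : ℂ) • (1 : Matrix (Fin d) (Fin d) ℂ)

open Matrix

open scoped MatrixOrder in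
lemma msqrt_of_posSemidef {d : ℕ} {A : Matrix (Fin d) (Fin d) ℂ} (h : A.PosSemidef) :
    msqrt A = CFC.sqrt A := by
  rw [msqrt, dif_pos h, CFC.sqrt_eq_cfc, cfc_nnreal_eq_real _ A, h.1.cfc_eq, IsHermitian.cfc,
    Unitary.conjStarAlgAut_apply]
  congr 3
  funext i
  simp [Real.coe_sqrt, h.eigenvalues_nonneg i]

open scoped MatrixOrder in
lemma msqrt_unique {d : ℕ} {A B : Matrix (Fin d) (Fin d) ℂ} (hB : B.PosSemidef)
    (hA : A.PosSemidef) (h : A * A = B) : msqrt B = A := by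
  rw [msqrt_of_posSemidef hB]
  exact CFC.sqrt_unique h hA.nonneg

open scoped MatrixOrder in
lemma msqrt_posSemidef {d : ℕ} {A : Matrix (Fin d) (Fin d) ℂ} (h : A.PosSemidef) :
    (msqrt A).PosSemidef := by
  rw [msqrt_of_posSemidef h]; exact (CFC.sqrt_nonneg A).posSemidef

open scoped MatrixOrder in
lemma msqrt_mul_self {d : ℕ} {A : Matrix (Fin d) (Fin d) ℂ} (h : A.PosSemidef) :
    msqrt A * msqrt A = A := by
  rw [msqrt_of_posSemidef h]; exact CFC.sqrt_mul_sqrt_self A h.nonneg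

lemma trace_msqrt {d : ℕ} {A : Matrix (Fin d) (Fin d) ℂ} (h : A.PosSemidef) :
    (msqrt A).trace = ((∑ i, Real.sqrt (h.1.eigenvalues i) : ℝ) : ℂ) := by
  rw [msqrt, dif_pos h]
  rw [Matrix.trace_mul_cycle, Unitary.coe_star_mul_self, Matrix.one_mul,
    Matrix.trace_diagonal]
  push_cast
  rfl

lemma det_smul_one_sub {d : ℕ} {A : Matrix (Fin d) (Fin d) ℂ} (hA : A.IsHermitian) (z : ℂ) :
    (z • (1 : Matrix (Fin d) (Fin d) ℂ) - A).det = ∏ i, (z - (hA.eigenvalues i : ℂ)) := by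
  have hU : (hA.eigenvectorUnitary : Matrix (Fin d) (Fin d) ℂ) *
      (star hA.eigenvectorUnitary : Matrix (Fin d) (Fin d) ℂ) = 1 :=
    Matrix.mem_unitaryGroup_iff.mp hA.eigenvectorUnitary.2
  have h1 : z • (1 : Matrix (Fin d) (Fin d) ℂ) - A =
      (hA.eigenvectorUnitary : Matrix (Fin d) (Fin d) ℂ) *
        (diagonal fun i => z - (hA.eigenvalues i : ℂ)) *
        (star hA.eigenvectorUnitary : Matrix (Fin d) (Fin d) ℂ) := by
    have hdiag : (diagonal fun i => z - (hA.eigenvalues i : ℂ)) =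
        z • (1 : Matrix (Fin d) (Fin d) ℂ) - diagonal (RCLike.ofReal ∘ hA.eigenvalues) := by
      ext i j
      by_cases hij : i = j <;> simp [diagonal, hij, Matrix.one_apply]
    rw [hdiag, Matrix.mul_sub, Matrix.sub_mul, Matrix.mul_smul, Matrix.mul_one,
      Matrix.smul_mul, hU, ← Unitary.conjStarAlgAut_apply (S := ℂ), ← hA.spectral_theorem]
  rw [h1, Matrix.det_mul_comm, ← Matrix.mul_assoc, Unitary.coe_star_mul_self, Matrix.one_mul,
    Matrix.det_diagonal]

lemma det_flip {d : ℕ} (M : Matrix (Fin d) (Fin d) ℂ) (z : ℂ) :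
    (z • (1 : Matrix (Fin d) (Fin d) ℂ) - Mᴴ * M).det =
      (z • (1 : Matrix (Fin d) (Fin d) ℂ) - M * Mᴴ).det := by
  by_cases hz : z = 0
  · subst hz
    simp only [zero_smul, zero_sub, Matrix.det_neg]
    rw [Matrix.det_mul_comm]
  · have e1 : z • (1 : Matrix (Fin d) (Fin d) ℂ) - Mᴴ * M =
        z • ((1 : Matrix (Fin d) (Fin d) ℂ) - (z⁻¹ • Mᴴ) * M) := by
      rw [smul_sub, Matrix.smul_mul, smul_smul, mul_inv_cancel₀ hz, one_smul]
    have e2 : z • (1 : Matrix (Fin d) (Fin d) ℂ) - M * Mᴴ =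
        z • ((1 : Matrix (Fin d) (Fin d) ℂ) - M * (z⁻¹ • Mᴴ)) := by
      rw [smul_sub, Matrix.mul_smul, smul_smul, mul_inv_cancel₀ hz, one_smul]
    rw [e1, e2, Matrix.det_smul, Matrix.det_smul, Matrix.det_one_sub_mul_comm]

lemma sum_sqrt_eig_flip {d : ℕ} (M : Matrix (Fin d) (Fin d) ℂ) :
    ∑ i, Real.sqrt ((Matrix.posSemidef_conjTranspose_mul_self M).1.eigenvalues i)
      = ∑ i, Real.sqrt ((Matrix.posSemidef_self_mul_conjTranspose M).1.eigenvalues i) := by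
  set lam := (Matrix.posSemidef_conjTranspose_mul_self M).1.eigenvalues with hlam
  set mu := (Matrix.posSemidef_self_mul_conjTranspose M).1.eigenvalues with hmu
  have hdet : ∀ z : ℂ, ∏ i, (z - (lam i : ℂ)) = ∏ i, (z - (mu i : ℂ)) := by
    intro z
    rw [← det_smul_one_sub (Matrix.posSemidef_conjTranspose_mul_self M).1,
      ← det_smul_one_sub (Matrix.posSemidef_self_mul_conjTranspose M).1]
    exact det_flip M z
  have hp : ∏ i, (Polynomial.X - Polynomial.C ((lam i : ℂ))) =
      ∏ i, (Polynomial.X - Polynomial.C ((mu i : ℂ))) := by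
    apply Polynomial.funext
    intro z
    simpa [Polynomial.eval_prod] using hdet z
  have hmult : (Finset.univ.val.map fun i => ((lam i : ℂ))) =
      (Finset.univ.val.map fun i => ((mu i : ℂ))) := by
    have h1 := congrArg Polynomial.roots hp
    rwa [Finset.prod_eq_multiset_prod, Finset.prod_eq_multiset_prod,
      show (Finset.univ.val.map fun i => Polynomial.X - Polynomial.C ((lam i : ℂ))) =
        ((Finset.univ.val.map fun i => ((lam i : ℂ))).map
          fun a => Polynomial.X - Polynomial.C a) by rw [Multiset.map_map]; rfl,
      show (Finset.univ.val.map fun i => Polynomial.X - Polynomial.C ((mu i : ℂ))) =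
        ((Finset.univ.val.map fun i => ((mu i : ℂ))).map
          fun a => Polynomial.X - Polynomial.C a) by rw [Multiset.map_map]; rfl,
      Polynomial.roots_multiset_prod_X_sub_C, Polynomial.roots_multiset_prod_X_sub_C] at h1
  have hre : (Finset.univ.val.map fun i => lam i) = (Finset.univ.val.map fun i => mu i) := by
    have := congrArg (Multiset.map Complex.re) hmult
    simpa [Multiset.map_map, Function.comp_def] using this
  rw [Finset.sum_eq_multiset_sum, Finset.sum_eq_multiset_sum,
    show (Finset.univ.val.map fun i => Real.sqrt (lam i)) =
      ((Finset.univ.val.map fun i => lam i).map Real.sqrt) by rw [Multiset.map_map]; rfl,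
    show (Finset.univ.val.map fun i => Real.sqrt (mu i)) =
      ((Finset.univ.val.map fun i => mu i).map Real.sqrt) by rw [Multiset.map_map]; rfl,
    hre]

lemma trace_msqrt_flip {d : ℕ} (M : Matrix (Fin d) (Fin d) ℂ) :
    (msqrt (Mᴴ * M)).trace = (msqrt (M * Mᴴ)).trace := by
  rw [trace_msqrt (Matrix.posSemidef_conjTranspose_mul_self M),
    trace_msqrt (Matrix.posSemidef_self_mul_conjTranspose M), sum_sqrt_eig_flip M]

lemma trace_re_nonneg_mul_conjTranspose {d : ℕ} (A : Matrix (Fin d) (Fin d) ℂ) :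
    0 ≤ (A * Aᴴ).trace.re := by
  have h : (A * Aᴴ).trace = ∑ i, ∑ j, (A i j * star (A i j)) := by
    simp [Matrix.trace, Matrix.diag, Matrix.mul_apply, Matrix.conjTranspose_apply]
  rw [h, Complex.re_sum]
  refine Finset.sum_nonneg fun i _ => ?_
  rw [Complex.re_sum]
  refine Finset.sum_nonneg fun j _ => ?_
  simp only [RingHom.coe_coe, Complex.star_def, Complex.mul_conj, Complex.ofReal_re]
  exact Complex.normSq_nonneg _

lemma two_trace_msqrt_le {d : ℕ} {X S R : Matrix (Fin d) (Fin d) ℂ}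
    (hX : X.PosSemidef) (hS : Sᴴ = S) (hR : Rᴴ = R) (hSR : S * R = 1) (hRS : R * S = 1) :
    2 * (msqrt X).trace.re ≤ (X * (R * R)).trace.re + (S * S).trace.re := by
  set Y := msqrt X with hYdef
  have hY2 : Y * Y = X := msqrt_mul_self hX
  have hYH : Yᴴ = Y := (msqrt_posSemidef hX).1
  have key := trace_re_nonneg_mul_conjTranspose (R * Y - S)
  have expand : (R * Y - S) * (R * Y - S)ᴴ
      = R * Y * (Y * R) - R * Y * S - S * (Y * R) + S * S := by
    rw [Matrix.conjTranspose_sub, Matrix.sub_mul, Matrix.mul_sub, Matrix.mul_sub,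
      Matrix.conjTranspose_mul, hYH, hR, hS]
    abel
  have t1 : (R * Y * (Y * R)).trace = (X * (R * R)).trace := by
    have : R * Y * (Y * R) = R * (Y * Y) * R := by noncomm_ring
    rw [this, hY2, Matrix.trace_mul_cycle, ← Matrix.mul_assoc, Matrix.trace_mul_comm,
      Matrix.mul_assoc]
  have t2 : (R * Y * S).trace = Y.trace := by
    rw [Matrix.trace_mul_cycle, hSR, Matrix.one_mul]
  have t3 : (S * (Y * R)).trace = Y.trace := by
    rw [← Matrix.mul_assoc, Matrix.trace_mul_cycle, hRS, Matrix.one_mul]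
  rw [expand] at key
  rw [Matrix.trace_add, Matrix.trace_sub, Matrix.trace_sub, t1, t2, t3] at key
  simp only [Complex.add_re, Complex.sub_re] at key
  linarith

noncomputable def psiProjX (d : ℕ) : Matrix (Fin d) (Fin d) ℂ :=
  Matrix.of fun _ _ => (1 / d : ℂ)

noncomputable def emat (d : ℕ) (s t : ℝ) : Matrix (Fin d) (Fin d) ℂ :=
  (s : ℂ) • 1 + (t : ℂ) • psiProjX d

lemma psiProjX_conjTranspose (d : ℕ) : (psiProjX d)ᴴ = psiProjX d := by
  ext i j; simp [psiProjX]

lemma psiProjX_mul_self {d : ℕ} (hd : 0 < d) : psiProjX d * psiProjX d = psiProjX d := by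
  have hdc : (d : ℂ) ≠ 0 := Nat.cast_ne_zero.mpr hd.ne'
  ext i j
  simp only [Matrix.mul_apply, psiProjX, Matrix.of_apply]
  rw [Finset.sum_const, Finset.card_univ, Fintype.card_fin]
  rw [nsmul_eq_mul]
  field_simp

lemma psiProjX_posSemidef {d : ℕ} (hd : 0 < d) : (psiProjX d).PosSemidef := by
  have h : psiProjX d = (psiProjX d)ᴴ * psiProjX d := by
    rw [psiProjX_conjTranspose, psiProjX_mul_self hd]
  rw [h]
  exact Matrix.posSemidef_conjTranspose_mul_self _

lemma one_sub_psiProjX_posSemidef {d : ℕ} (hd : 0 < d) :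
    ((1 : Matrix (Fin d) (Fin d) ℂ) - psiProjX d).PosSemidef := by
  have h : (1 : Matrix (Fin d) (Fin d) ℂ) - psiProjX d
      = ((1 : Matrix (Fin d) (Fin d) ℂ) - psiProjX d)ᴴ *
        ((1 : Matrix (Fin d) (Fin d) ℂ) - psiProjX d) := by
    simp only [Matrix.conjTranspose_sub, Matrix.conjTranspose_one, psiProjX_conjTranspose,
      Matrix.mul_sub, Matrix.sub_mul, Matrix.mul_one, Matrix.one_mul, psiProjX_mul_self hd]
    abel
  rw [h]
  exact Matrix.posSemidef_conjTranspose_mul_self _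

lemma psiProjX_trace {d : ℕ} (hd : 0 < d) : (psiProjX d).trace = 1 := by
  have hdc : (d : ℂ) ≠ 0 := Nat.cast_ne_zero.mpr hd.ne'
  simp only [Matrix.trace, Matrix.diag, psiProjX, Matrix.of_apply]
  rw [Finset.sum_const, Finset.card_univ, Fintype.card_fin]
  rw [nsmul_eq_mul]
  field_simp

lemma em_mul {d : ℕ} (hd : 0 < d) (s t u v : ℝ) :
    emat d s t * emat d u v = emat d (s * u) (s * v + t * u + t * v) := by
  unfold emat
  rw [Matrix.add_mul, Matrix.mul_add, Matrix.mul_add]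
  simp only [Matrix.smul_mul, Matrix.mul_smul, smul_smul, Matrix.one_mul, Matrix.mul_one,
    psiProjX_mul_self hd]
  push_cast
  module

lemma em_conjTranspose {d : ℕ} (s t : ℝ) : (emat d s t)ᴴ = emat d s t := by
  unfold emat
  rw [Matrix.conjTranspose_add, Matrix.conjTranspose_smul, Matrix.conjTranspose_smul,
    Matrix.conjTranspose_one, psiProjX_conjTranspose]
  simp [Complex.star_def, Complex.conj_ofReal]

lemma smul_posSemidef {d : ℕ} {A : Matrix (Fin d) (Fin d) ℂ} {r : ℝ} (hr : 0 ≤ r)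
    (hA : A.PosSemidef) : ((r : ℂ) • A).PosSemidef := by
  have h0 : (0 : ℂ) ≤ (r : ℂ) := by
    rw [Complex.le_def]
    simp [hr]
  exact hA.smul h0

lemma em_posSemidef {d : ℕ} (hd : 0 < d) {s t : ℝ} (hs : 0 ≤ s) (hst : 0 ≤ s + t) :
    (emat d s t).PosSemidef := by
  have h : emat d s t = (s : ℂ) • ((1 : Matrix (Fin d) (Fin d) ℂ) - psiProjX d)
      + ((s + t : ℝ) : ℂ) • psiProjX d := by
    unfold emat
    push_cast
    module
  rw [h]
  exact (smul_posSemidef hs (one_sub_psiProjX_posSemidef hd)).add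
    (smul_posSemidef hst (psiProjX_posSemidef hd))

lemma em_trace {d : ℕ} (hd : 0 < d) (s t : ℝ) :
    (emat d s t).trace = (((d : ℝ) * s + t : ℝ) : ℂ) := by
  unfold emat
  rw [Matrix.trace_add, Matrix.trace_smul, Matrix.trace_smul, Matrix.trace_one,
    psiProjX_trace hd]
  rw [Fintype.card_fin]
  simp only [smul_eq_mul]
  push_cast
  ring

lemma em_apply {d : ℕ} (s t : ℝ) (i : Fin d) : emat d s t i i = (s : ℂ) + (t : ℂ) / d := by
  simp [emat, psiProjX, Matrix.one_apply]
  ring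

lemma psiProj_eq (d : ℕ) : psiProj d = psiProjX d := rfl

lemma rhoM_eq (d : ℕ) (p : ℝ) : rhoM d p = emat d ((1 - p) / d) p := by
  unfold rhoM emat
  rw [psiProj_eq, add_comm]

lemma trace_incoherent_psiProjX {d : ℕ} (hd : 0 < d) {σ : Matrix (Fin d) (Fin d) ℂ}
    (hσ : IsIncoherent σ) : (σ * psiProjX d).trace = 1 / d := by
  have h : (σ * psiProjX d).trace = ∑ i, ∑ k, σ i k * (1 / d : ℂ) := by
    simp [Matrix.trace, Matrix.diag, Matrix.mul_apply, psiProjX]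
  rw [h]
  have h2 : ∀ i : Fin d, ∑ k, σ i k * (1 / d : ℂ) = σ i i * (1 / d : ℂ) := by
    intro i
    refine Finset.sum_eq_single i (fun k _ hk => ?_) (by simp)
    rw [hσ.2 (Ne.symm hk), zero_mul]
  simp_rw [h2, ← Finset.sum_mul]
  have : ∑ i, σ i i = σ.trace := rfl
  rw [this, hσ.1.2, one_mul]

lemma trace_incoherent_emat {d : ℕ} (hd : 0 < d) {σ : Matrix (Fin d) (Fin d) ℂ}
    (hσ : IsIncoherent σ) (s t : ℝ) :
    (σ * emat d s t).trace = (((s + t / d : ℝ)) : ℂ) := by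
  unfold emat
  rw [Matrix.mul_add, Matrix.mul_smul, Matrix.mul_smul, Matrix.mul_one, Matrix.trace_add,
    Matrix.trace_smul, Matrix.trace_smul, hσ.1.2, trace_incoherent_psiProjX hd hσ]
  push_cast
  simp [smul_eq_mul]
  ring

noncomputable def bb (d : ℕ) (p : ℝ) : ℝ := Real.sqrt ((1 - p) / d)
noncomputable def aa (d : ℕ) (p : ℝ) : ℝ := Real.sqrt ((1 - p + d * p) / d)
noncomputable def cc (d : ℕ) (p : ℝ) : ℝ :=
  Real.sqrt d * bb d p + (aa d p - bb d p) / Real.sqrt d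

section main

variable {d : ℕ} {p : ℝ} (hd : 0 < d) (hp0 : 0 < p) (hp1 : p ≤ 1)

include hd hp0 hp1

lemma hdR : (0 : ℝ) < d := by exact_mod_cast hd

lemma hb2 : bb d p ^ 2 = (1 - p) / d := by
  have := hdR hd hp0 hp1
  rw [bb, Real.sq_sqrt (div_nonneg (by linarith) this.le)]

lemma ha2 : aa d p ^ 2 = (1 - p + d * p) / d := by
  have := hdR hd hp0 hp1
  have h : (0:ℝ) ≤ 1 - p + d * p := by nlinarith
  rw [aa, Real.sq_sqrt (div_nonneg h this.le)]

lemma hb0 : 0 ≤ bb d p := Real.sqrt_nonneg _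

lemma ha0 : 0 ≤ aa d p := Real.sqrt_nonneg _

lemma hba : bb d p ≤ aa d p := by
  have hdp := hdR hd hp0 hp1
  apply Real.sqrt_le_sqrt
  have h : (0:ℝ) ≤ d * p := by positivity
  gcongr <;> nlinarith

lemma habp : aa d p ^ 2 - bb d p ^ 2 = p := by
  have hdp := hdR hd hp0 hp1
  rw [ha2 hd hp0 hp1, hb2 hd hp0 hp1]
  field_simp
  ring

lemma msqrt_rhoM : msqrt (rhoM d p) = emat d (bb d p) (aa d p - bb d p) := by
  have hdp := hdR hd hp0 hp1
  have h1 : (0:ℝ) ≤ (1 - p) / d := by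
    have : (0:ℝ) ≤ 1 - p := by linarith
    positivity
  have h2 : (0:ℝ) ≤ (1 - p) / d + p := by positivity
  rw [rhoM_eq]
  refine msqrt_unique (em_posSemidef hd h1 h2)
    (em_posSemidef hd (hb0 hd hp0 hp1) (by simpa using ha0 hd hp0 hp1)) ?_
  rw [em_mul hd]
  have key := habp hd hp0 hp1
  have hbb := hb2 hd hp0 hp1
  have e1 : bb d p * bb d p = (1 - p) / (d:ℝ) := by linear_combination hbb
  have e2 : bb d p * (aa d p - bb d p) + (aa d p - bb d p) * bb d p
      + (aa d p - bb d p) * (aa d p - bb d p) = p := by linear_combination key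
  rw [e1, e2]

lemma cc_sq : cc d p ^ 2 = (d : ℝ) * (bb d p + (aa d p - bb d p) / d) ^ 2 := by
  have hdp := hdR hd hp0 hp1
  have hs : Real.sqrt d * Real.sqrt d = d := Real.mul_self_sqrt (le_of_lt hdp)
  have hs0 : (0:ℝ) < Real.sqrt d := Real.sqrt_pos.mpr hdp
  have hc : cc d p = Real.sqrt d * (bb d p + (aa d p - bb d p) / d) := by
    rw [cc]
    field_simp
    linear_combination (bb d p - aa d p) * hs
  rw [hc, mul_pow]
  rw [Real.sq_sqrt hdp.le]

end main

section main2

variable {d : ℕ} {p : ℝ} (hd : 0 < d) (hp0 : 0 < p) (hp1 : p ≤ 1)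

include hd hp0 hp1

lemma sigma0_incoherent : IsIncoherent (emat d (1/d) 0) := by
  have hdp : (0:ℝ) < d := by exact_mod_cast hd
  refine ⟨⟨em_posSemidef hd (by positivity) (by positivity), ?_⟩, ?_⟩
  · rw [em_trace hd]
    norm_num
    field_simp
  · intro i j hij
    simp [emat, psiProjX, Matrix.one_apply, hij]

lemma fid_sigma0 : fid (rhoM d p) (emat d (1/d) 0) = cc d p ^ 2 := by
  have hdp : (0:ℝ) < d := by exact_mod_cast hd
  have hs : Real.sqrt d * Real.sqrt d = d := Real.mul_self_sqrt hdp.le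
  have hs0 : (0:ℝ) < Real.sqrt d := Real.sqrt_pos.mpr hdp
  have hb := hb0 (p := p) hd hp0 hp1
  have ha := ha0 (p := p) hd hp0 hp1
  have hab := hba hd hp0 hp1
  have hbsq := hb2 hd hp0 hp1
  have hasq := ha2 hd hp0 hp1
  have h1p : (0:ℝ) ≤ 1 - p := by linarith
  have hm1 : msqrt (emat d (1/d) 0) = emat d (1/Real.sqrt d) 0 := by
    refine msqrt_unique (em_posSemidef hd (by positivity) (by positivity))
      (em_posSemidef hd (by positivity) (by positivity)) ?_
    rw [em_mul hd]
    have e1 : 1/Real.sqrt d * (1/Real.sqrt d) = 1/(d:ℝ) := by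
      rw [div_mul_div_comm, one_mul, hs]
    have e2 : 1/Real.sqrt d * 0 + 0 * (1/Real.sqrt d) + 0 * 0 = (0:ℝ) := by ring
    rw [e1, e2]
  have hmid : msqrt (emat d (1/d) 0) * rhoM d p * msqrt (emat d (1/d) 0)
      = emat d ((1-p)/d^2) (p/d) := by
    rw [hm1, rhoM_eq, em_mul hd, em_mul hd]
    have hinv : 1/Real.sqrt d * (1/Real.sqrt d) = 1/(d:ℝ) := by
      rw [div_mul_div_comm, one_mul, hs]
    have e1 : 1/Real.sqrt d * ((1-p)/d) * (1/Real.sqrt d) = (1-p)/(d:ℝ)^2 := by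
      rw [mul_comm (1/Real.sqrt d) ((1-p)/(d:ℝ)), mul_assoc, hinv, div_mul_div_comm, mul_one,
        ← sq]
    have e2 : 1/Real.sqrt d * ((1-p)/d) * 0 + (1/Real.sqrt d * p + 0 * ((1-p)/d) + 0 * p)
        * (1/Real.sqrt d) + (1/Real.sqrt d * p + 0 * ((1-p)/d) + 0 * p) * 0 = p/(d:ℝ) := by
      simp only [zero_mul, mul_zero, zero_add, add_zero]
      rw [mul_comm (1/Real.sqrt d) p, mul_assoc, hinv, mul_one_div]
    rw [e1, e2]
  have hfin : msqrt (emat d ((1-p)/d^2) (p/d))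
      = emat d (bb d p / Real.sqrt d) ((aa d p - bb d p)/Real.sqrt d) := by
    refine msqrt_unique
      (em_posSemidef hd (div_nonneg h1p (by positivity))
        (add_nonneg (div_nonneg h1p (by positivity)) (by positivity)))
      (em_posSemidef hd (div_nonneg hb hs0.le)
        (by rw [← add_div, add_sub_cancel]; exact div_nonneg ha hs0.le)) ?_
    rw [em_mul hd]
    have e1 : bb d p / Real.sqrt d * (bb d p / Real.sqrt d) = (1-p)/(d:ℝ)^2 := by
      rw [div_mul_div_comm, hs, ← sq, hbsq, div_div, ← sq]
    have e2 : bb d p / Real.sqrt d * ((aa d p - bb d p)/Real.sqrt d)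
        + (aa d p - bb d p)/Real.sqrt d * (bb d p / Real.sqrt d)
        + (aa d p - bb d p)/Real.sqrt d * ((aa d p - bb d p)/Real.sqrt d) = p/(d:ℝ) := by
      rw [div_mul_div_comm, div_mul_div_comm, div_mul_div_comm, hs, ← add_div,
        ← add_div]
      rw [show bb d p * (aa d p - bb d p) + (aa d p - bb d p) * bb d p
        + (aa d p - bb d p) * (aa d p - bb d p) = aa d p ^2 - bb d p ^2 by ring,
        habp hd hp0 hp1]
    rw [e1, e2]
  rw [fid, hmid, hfin, em_trace hd, Complex.ofReal_re, cc]
  congr 1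
  field_simp
  linear_combination -(bb d p) * hs

end main2

lemma emat_one {d : ℕ} : emat d 1 0 = (1 : Matrix (Fin d) (Fin d) ℂ) := by
  simp [emat]

lemma sandwich_psiProjX {d : ℕ} {σ : Matrix (Fin d) (Fin d) ℂ} (hσ : IsIncoherent σ) :
    psiProjX d * σ * psiProjX d = emat d 0 (1/d) := by
  have hcol : ∀ k, ∑ l, σ l k = σ k k := fun k =>
    Finset.sum_eq_single k (fun l _ h => hσ.2 h) (by simp)
  have htr : ∑ k, σ k k = 1 := hσ.1.2
  ext i j
  have hL : (psiProjX d * σ * psiProjX d) i j = ∑ k, (∑ l, (1/(d:ℂ)) * σ l k) * (1/(d:ℂ)) := by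
    simp [Matrix.mul_apply, psiProjX]
  rw [hL]
  have hcol' : ∀ k, ∑ l, (1/(d:ℂ)) * σ l k = (1/(d:ℂ)) * σ k k := by
    intro k
    rw [← Finset.mul_sum, hcol]
  simp_rw [hcol', ← Finset.sum_mul, ← Finset.mul_sum, htr]
  simp [emat, psiProjX, Matrix.one_apply]

section main3

variable {d : ℕ} {p : ℝ} (hd : 0 < d) (hp0 : 0 < p) (hp1 : p ≤ 1)

include hd hp0 hp1

lemma rhoM_posSemidef : (rhoM d p).PosSemidef := by
  have hdp : (0:ℝ) < d := by exact_mod_cast hd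
  have h1 : (0:ℝ) ≤ (1 - p) / d := div_nonneg (by linarith) hdp.le
  rw [rhoM_eq]
  exact em_posSemidef hd h1 (by positivity)

lemma fid_le {σ : Matrix (Fin d) (Fin d) ℂ} (hσ : IsIncoherent σ) :
    fid (rhoM d p) σ ≤ cc d p ^ 2 := by
  have hdp : (0:ℝ) < d := by exact_mod_cast hd
  have hs : Real.sqrt d * Real.sqrt d = d := Real.mul_self_sqrt hdp.le
  have hs0 : (0:ℝ) < Real.sqrt d := Real.sqrt_pos.mpr hdp
  have hb := hb0 (d := d) (p := p) hd hp0 hp1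
  have ha := ha0 (d := d) (p := p) hd hp0 hp1
  have hab := hba hd hp0 hp1
  have hbsq := hb2 hd hp0 hp1
  have hasq := ha2 hd hp0 hp1
  have h1p : (0:ℝ) ≤ 1 - p := by linarith
  set N := msqrt σ with hN
  have hNpsd : N.PosSemidef := msqrt_posSemidef hσ.1.1
  have hNH : Nᴴ = N := hNpsd.1
  have hNN : N * N = σ := msqrt_mul_self hσ.1.1
  set Q := emat d (bb d p) (aa d p - bb d p) with hQdef
  have hQH : Qᴴ = Q := em_conjTranspose _ _
  have hQQ : Q * Q = rhoM d p := by
    rw [hQdef, ← msqrt_rhoM hd hp0 hp1]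
    exact msqrt_mul_self (rhoM_posSemidef hd hp0 hp1)
  have h1 : N * rhoM d p * N = (Q * N)ᴴ * (Q * N) := by
    rw [Matrix.conjTranspose_mul, hNH, hQH, ← hQQ]
    noncomm_ring
  have h2 : (Q * N) * (Q * N)ᴴ = Q * σ * Q := by
    rw [Matrix.conjTranspose_mul, hNH, hQH, ← hNN]
    noncomm_ring
  have hXpsd : (Q * σ * Q).PosSemidef := by
    rw [← h2]; exact Matrix.posSemidef_self_mul_conjTranspose _
  have hfid : fid (rhoM d p) σ = ((msqrt (Q * σ * Q)).trace.re) ^ 2 := by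
    rw [fid, ← hN, h1, trace_msqrt_flip, h2]
  have htrnn : 0 ≤ (msqrt (Q * σ * Q)).trace.re := by
    rw [trace_msqrt hXpsd, Complex.ofReal_re]
    exact Finset.sum_nonneg fun i _ => Real.sqrt_nonneg _
  rw [hfid]
  have hcc : 0 ≤ cc d p := by
    rw [cc]
    have : 0 ≤ aa d p - bb d p := by linarith
    positivity
  have hkey : (msqrt (Q * σ * Q)).trace.re ≤ cc d p := by
    rcases eq_or_lt_of_le hp1 with hp | hp
    · -- p = 1
      subst hp
      have hbz : bb d 1 = 0 := by rw [bb]; simp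
      have haz : aa d 1 = 1 := by
        rw [aa]
        rw [show (1 - 1 + (d:ℝ) * 1) / d = 1 by field_simp; ring]
        exact Real.sqrt_one
      have hQP : Q = psiProjX d := by
        rw [hQdef, hbz, haz]
        simp [emat]
      have hXval : Q * σ * Q = emat d 0 (1/d) := by
        rw [hQP]; exact sandwich_psiProjX hσ
      have hmsq : msqrt (emat d 0 (1/d)) = emat d 0 (1/Real.sqrt d) := by
        refine msqrt_unique (em_posSemidef hd le_rfl (by positivity))
          (em_posSemidef hd le_rfl (by positivity)) ?_
        rw [em_mul hd]
        rw [show (0:ℝ) * 0 = 0 by ring,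
          show (0:ℝ) * (1/Real.sqrt d) + 1/Real.sqrt d * 0 + 1/Real.sqrt d * (1/Real.sqrt d)
            = 1/(d:ℝ) by rw [div_mul_div_comm, one_mul, hs]; ring]
      rw [hXval, hmsq, em_trace hd, Complex.ofReal_re, cc, hbz, haz]
      rw [show (d:ℝ) * 0 + 1/Real.sqrt d = 1/Real.sqrt d by ring]
      rw [show Real.sqrt d * 0 + (1 - 0)/Real.sqrt d = 1/Real.sqrt d by ring]
    · -- p < 1
      have hbpos : 0 < bb d p := Real.sqrt_pos.mpr (div_pos (by linarith) hdp)
      have hapos : 0 < aa d p := Real.sqrt_pos.mpr (div_pos (by nlinarith) hdp)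
      set s1 := Real.sqrt (bb d p / Real.sqrt d) with hs1def
      set u1 := Real.sqrt (aa d p / Real.sqrt d) with hu1def
      have hs1pos : 0 < s1 := Real.sqrt_pos.mpr (div_pos hbpos hs0)
      have hu1pos : 0 < u1 := Real.sqrt_pos.mpr (div_pos hapos hs0)
      have hs1sq : s1 * s1 = bb d p / Real.sqrt d := Real.mul_self_sqrt (div_nonneg hb hs0.le)
      have hu1sq : u1 * u1 = aa d p / Real.sqrt d := Real.mul_self_sqrt (div_nonneg ha hs0.le)
      set S := emat d s1 (u1 - s1) with hSdef
      set R := emat d (1/s1) (1/u1 - 1/s1) with hRdef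
      have hSR : S * R = 1 := by
        rw [hSdef, hRdef, em_mul hd,
          show s1 * (1/s1) = 1 by field_simp,
          show s1 * (1/u1 - 1/s1) + (u1 - s1) * (1/s1) + (u1 - s1) * (1/u1 - 1/s1) = 0 by
            field_simp; ring,
          emat_one]
      have hRS : R * S = 1 := by
        rw [hSdef, hRdef, em_mul hd,
          show 1/s1 * s1 = 1 by field_simp,
          show 1/s1 * (u1 - s1) + (1/u1 - 1/s1) * s1 + (1/u1 - 1/s1) * (u1 - s1) = 0 by
            field_simp; ring,
          emat_one]
      have hSS : S * S = emat d (bb d p / Real.sqrt d) ((aa d p - bb d p) / Real.sqrt d) := by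
        rw [hSdef, em_mul hd,
          show s1 * (u1 - s1) + (u1 - s1) * s1 + (u1 - s1) * (u1 - s1) = u1 * u1 - s1 * s1 by
            ring,
          hs1sq, hu1sq, div_sub_div_same]
      have hRR : R * R = emat d (Real.sqrt d / bb d p)
          (Real.sqrt d / aa d p - Real.sqrt d / bb d p) := by
        rw [hRdef, em_mul hd,
          show 1/s1 * (1/u1 - 1/s1) + (1/u1 - 1/s1) * (1/s1) + (1/u1 - 1/s1) * (1/u1 - 1/s1)
            = 1/(u1 * u1) - 1/(s1 * s1) by field_simp; ring,
          show 1/s1 * (1/s1) = 1/(s1 * s1) by rw [div_mul_div_comm, one_mul],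
          hs1sq, hu1sq, one_div_div, one_div_div]
      have hK : Q * (R * R) * Q = emat d (Real.sqrt d * bb d p)
          (Real.sqrt d * (aa d p - bb d p)) := by
        rw [hRR, hQdef, em_mul hd, em_mul hd]
        refine congrArg₂ (emat d) ?_ ?_
        · field_simp
        · field_simp
          ring
      have htrS : (S * S).trace.re = cc d p := by
        rw [hSS, em_trace hd, Complex.ofReal_re, cc]
        congr 1
        field_simp
        linear_combination (-1 : ℝ) * hs
      have htrX : ((Q * σ * Q) * (R * R)).trace.re = cc d p := by
        rw [show (Q * σ * Q) * (R * R) = Q * σ * (Q * (R * R)) from by noncomm_ring,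
          Matrix.trace_mul_cycle, Matrix.trace_mul_comm, hK,
          trace_incoherent_emat hd hσ, Complex.ofReal_re, cc]
        congr 1
        field_simp
        linear_combination (aa d p - bb d p) * hs
      have hmain := two_trace_msqrt_le hXpsd (em_conjTranspose _ _) (em_conjTranspose _ _)
        hSR hRS
      rw [htrS, htrX] at hmain
      linarith
  calc ((msqrt (Q * σ * Q)).trace.re) ^ 2 ≤ cc d p ^ 2 := by
        exact pow_le_pow_left₀ htrnn hkey 2

end main3

/-- The upper bound of Theorem 2 is tight for the maximally coherent mixed state. -/
theorem upper_bound_tight_rhoM {d : ℕ} (hd : 1 ≤ d) (p : ℝ) (hp0 : 0 < p) (hp1 : p ≤ 1) :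
    1 - ∑ i, (((msqrt (rhoM d p)) i i).re) ^ 2 = Cg (rhoM d p) ∧
      Cg (rhoM d p) =
        1 - (Real.sqrt (1 - p) +
          (1 / d) * (Real.sqrt (1 - p + d * p) - Real.sqrt (1 - p))) ^ 2 := by
  have hd0 : 0 < d := hd
  have hdp : (0:ℝ) < d := by exact_mod_cast hd0
  have hs : Real.sqrt d * Real.sqrt d = d := Real.mul_self_sqrt hdp.le
  have hs0 : (0:ℝ) < Real.sqrt d := Real.sqrt_pos.mpr hdp
  have hsup : sSup {x : ℝ | ∃ σ : Matrix (Fin d) (Fin d) ℂ, IsIncoherent σ ∧ x = fid (rhoM d p) σ}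
      = cc d p ^ 2 := by
    apply IsGreatest.csSup_eq
    constructor
    · exact ⟨emat d (1/d) 0, sigma0_incoherent hd0 hp0 hp1, (fid_sigma0 hd0 hp0 hp1).symm⟩
    · rintro x ⟨σ, hσ, rfl⟩
      exact fid_le hd0 hp0 hp1 hσ
  have hCg : Cg (rhoM d p) = 1 - cc d p ^ 2 := by rw [Cg, hsup]
  have hdiag : ∑ i, (((msqrt (rhoM d p)) i i).re) ^ 2 = cc d p ^ 2 := by
    rw [msqrt_rhoM hd0 hp0 hp1]
    have he : ∀ i : Fin d, ((emat d (bb d p) (aa d p - bb d p)) i i).re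
        = bb d p + (aa d p - bb d p) / d := by
      intro i
      rw [em_apply]
      have : ((bb d p : ℂ)) + ((aa d p - bb d p : ℝ) : ℂ) / (d : ℂ)
          = (((bb d p + (aa d p - bb d p) / d : ℝ)) : ℂ) := by
        push_cast
        ring
      rw [this, Complex.ofReal_re]
    simp_rw [he]
    rw [Finset.sum_const, Finset.card_univ, Fintype.card_fin, nsmul_eq_mul,
      cc_sq hd0 hp0 hp1]
  have hb1 : Real.sqrt (1 - p) = Real.sqrt d * bb d p := by
    rw [bb, ← Real.sqrt_mul hdp.le, show (d:ℝ) * ((1 - p) / d) = 1 - p by field_simp]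
  have ha1 : Real.sqrt (1 - p + d * p) = Real.sqrt d * aa d p := by
    rw [aa, ← Real.sqrt_mul hdp.le, show (d:ℝ) * ((1 - p + d * p) / d) = 1 - p + d * p by
      field_simp]
  have hexp : Real.sqrt (1 - p) + (1 / d) * (Real.sqrt (1 - p + d * p) - Real.sqrt (1 - p))
      = cc d p := by
    rw [hb1, ha1, cc]
    field_simp
    linear_combination (aa d p - bb d p) * hs
  exact ⟨by rw [hCg, hdiag], by rw [hCg, hexp]⟩
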